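/- Under Assumption 1, for any x ∈ ℝ^d, any batch size b ≥ 1, and any points {w_i}_{i∈𝒢} indexed by a finite set 𝒢 of size G ≥ 2, the averaged pairwise deviation of the SVRG estimators satisfies (1/(G(G−1))) Σ_{i,l∈𝒢, i≠l} (1/m^{2b}) Σ_{J ∈ {1,…,m}^b} Σ_{J' ∈ {1,…,m}^b} ‖g(x, w_i, J) − g(x, w_l, J')‖² ≤ (16L/b)·(f(x) − f(x*)) + (8/b)·σ_*², where σ_*² = (1/(Gm)) Σ_{i∈𝒢} Σ_{j=1}^m ‖∇f_j(w_i) − ∇f_j(x*)‖². -/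

import Mathlib

open Finset
open scoped BigOperators InnerProductSpace

/-- The SVRG gradient estimator `g(x, w, J) = (1/b) ∑_t (∇f_{J t}(x) - ∇f_{J t}(w)) + ∇f(w)`,
where `Favg` plays the role of the full objective `f = (1/m) ∑_j f_j`. -/
noncomputable def gEst {d m b : ℕ} (f : Fin m → EuclideanSpace ℝ (Fin d) → ℝ)
    (Favg : EuclideanSpace ℝ (Fin d) → ℝ)
    (x w : EuclideanSpace ℝ (Fin d)) (J : Fin b → Fin m) : EuclideanSpace ℝ (Fin d) :=
  (b : ℝ)⁻¹ • ∑ t : Fin b, (gradient (f (J t)) x - gradient (f (J t)) w)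
    + gradient Favg w

/-! Each estimator minus `∇f(x)` is the mean of `b` independent uniform samples of the centred
family `∇f_j(x) - ∇f_j(w) - (∇f(x) - ∇f(w))`, so its mean square is `1/(bm)` times the
variance of that family, which is at most its second moment. Splitting the second moment through
`x*` and using cocoercivity of the gradients of the convex `L`-smooth `f_j`, which gives
`∑_j ‖∇f_j(x) - ∇f_j(x*)‖² ≤ 2Lm (f(x) - f(x*))`, bounds each mean square around `∇f(x)` by
`(4L/b)(f(x) - f(x*)) + (2/(bm)) ∑_j ‖∇f_j(w) - ∇f_j(x*)‖²`. A pairwise deviation is at most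
twice the sum of the two mean squares, and averaging over ordered pairs gives the bound. -/

section SmoothConvex

variable {E : Type*} [NormedAddCommGroup E] [InnerProductSpace ℝ E] [CompleteSpace E]
  {h : E → ℝ} {L : ℝ}

theorem Differentiable.hasDerivAt_comp_add_smul (hh : Differentiable ℝ h) (p v : E) (t : ℝ) :
    HasDerivAt (fun s : ℝ => h (p + s • v)) ⟪gradient h (p + t • v), v⟫_ℝ t := by
  have hline : HasDerivAt (fun s : ℝ => p + s • v) v t := by
    simpa using ((hasDerivAt_id t).smul_const v).const_add p
  have := (hasGradientAt_iff_hasFDerivAt.mp (hh _).hasGradientAt).comp_hasDerivAt t hline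
  rwa [InnerProductSpace.toDual_apply_apply] at this

theorem ConvexOn.add_inner_gradient_le (hconv : ConvexOn ℝ Set.univ h) (hh : Differentiable ℝ h)
    (p q : E) : h p + ⟪gradient h p, q - p⟫_ℝ ≤ h q := by
  have hline : ConvexOn ℝ Set.univ (fun s : ℝ => h (p + s • (q - p))) := by
    simpa [Function.comp_def, AffineMap.lineMap_apply, add_comm] using
      hconv.comp_affineMap (AffineMap.lineMap p q)
  have hslope := hline.le_slope_of_hasDerivAt (Set.mem_univ 0) (Set.mem_univ 1) one_pos
    (by simpa only [zero_smul, add_zero] using hh.hasDerivAt_comp_add_smul p (q - p) 0)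
  simp only [slope_def_field, one_smul, zero_smul, add_zero, sub_zero, div_one,
    add_sub_cancel] at hslope
  linarith

theorem Differentiable.le_add_inner_gradient_add_sq (hh : Differentiable ℝ h)
    (hlip : ∀ a c, ‖gradient h a - gradient h c‖ ≤ L * ‖a - c‖) (p q : E) :
    h q ≤ h p + ⟪gradient h p, q - p⟫_ℝ + L / 2 * ‖q - p‖ ^ 2 := by
  set v := q - p
  have hφ := hh.hasDerivAt_comp_add_smul p v
  have hB (s : ℝ) : HasDerivAt (fun s => h p + s * ⟪gradient h p, v⟫_ℝ + L / 2 * s ^ 2 * ‖v‖ ^ 2)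
      (⟪gradient h p, v⟫_ℝ + L * s * ‖v‖ ^ 2) s := by
    refine ((((hasDerivAt_id s).mul_const _).const_add (h p)).add
      (((hasDerivAt_pow 2 s).const_mul (L / 2)).mul_const (‖v‖ ^ 2))).congr_deriv ?_
    simp only [Nat.cast_ofNat]
    ring
  have hbound (s : ℝ) (hs : s ∈ Set.Ico (0 : ℝ) 1) :
      ⟪gradient h (p + s • v), v⟫_ℝ ≤ ⟪gradient h p, v⟫_ℝ + L * s * ‖v‖ ^ 2 :=
    calc ⟪gradient h (p + s • v), v⟫_ℝ
        = ⟪gradient h p, v⟫_ℝ + ⟪gradient h (p + s • v) - gradient h p, v⟫_ℝ := by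
          rw [inner_sub_left]; ring
      _ ≤ ⟪gradient h p, v⟫_ℝ + L * ‖(p + s • v) - p‖ * ‖v‖ := by
          gcongr
          exact (real_inner_le_norm _ _).trans (by gcongr; exact hlip _ _)
      _ = ⟪gradient h p, v⟫_ℝ + L * s * ‖v‖ ^ 2 := by
          rw [add_sub_cancel_left, norm_smul, Real.norm_eq_abs, abs_of_nonneg hs.1]
          ring
  have := image_le_of_deriv_right_le_deriv_boundary
    (fun s _ => (hφ s).continuousAt.continuousWithinAt) (fun s _ => (hφ s).hasDerivWithinAt)
    (by simp) (fun s _ => (hB s).continuousAt.continuousWithinAt)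
    (fun s _ => (hB s).hasDerivWithinAt) hbound (Set.right_mem_Icc.mpr zero_le_one)
  simpa [v] using this

theorem ConvexOn.norm_gradient_sub_sq_le (hconv : ConvexOn ℝ Set.univ h)
    (hh : Differentiable ℝ h) (hL : 0 < L)
    (hlip : ∀ a c, ‖gradient h a - gradient h c‖ ≤ L * ‖a - c‖) (a c : E) :
    ‖gradient h a - gradient h c‖ ^ 2 ≤ 2 * L * (h a - h c - ⟪gradient h c, a - c⟫_ℝ) := by
  set g := gradient h a - gradient h c
  -- compare the convexity lower bound at `c` with the descent upper bound at `a`,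
  -- both evaluated at the gradient step `a - L⁻¹ • g`
  have hlow := hconv.add_inner_gradient_le hh c (a - L⁻¹ • g)
  have hup := hh.le_add_inner_gradient_add_sq hlip a (a - L⁻¹ • g)
  have hg : ⟪gradient h a, g⟫_ℝ - ⟪gradient h c, g⟫_ℝ = ‖g‖ ^ 2 := by
    rw [← inner_sub_left, real_inner_self_eq_norm_sq]
  rw [show a - L⁻¹ • g - c = (a - c) - L⁻¹ • g by abel, inner_sub_right,
    real_inner_smul_right] at hlow
  rw [sub_sub_cancel_left, inner_neg_right, real_inner_smul_right, norm_neg, norm_smul,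
    Real.norm_eq_abs, abs_of_pos (inv_pos.mpr hL)] at hup
  have hquad : L / 2 * (L⁻¹ * ‖g‖) ^ 2 = L⁻¹ * ‖g‖ ^ 2 / 2 := by field_simp
  have key : L⁻¹ * ‖g‖ ^ 2 / 2 ≤ h a - h c - ⟪gradient h c, a - c⟫_ℝ := by
    have hg' := congrArg (L⁻¹ * ·) hg
    simp only [mul_sub] at hg'
    linarith
  calc ‖g‖ ^ 2 = 2 * L * (L⁻¹ * ‖g‖ ^ 2 / 2) := by field_simp
    _ ≤ _ := by gcongr

end SmoothConvex

section FiniteSum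

variable {E : Type*} [NormedAddCommGroup E] [InnerProductSpace ℝ E] [CompleteSpace E]
  {m : ℕ} {f : Fin m → E → ℝ} {F : E → ℝ}

theorem sum_gradient_eq_smul_gradient (hm : m ≠ 0) (hF : ∀ x, F x = (m : ℝ)⁻¹ * ∑ j, f j x)
    (hdiff : ∀ j, Differentiable ℝ (f j)) (y : E) :
    ∑ j, gradient (f j) y = (m : ℝ) • gradient F y := by
  have hgrad : HasGradientAt F ((m : ℝ)⁻¹ • ∑ j, gradient (f j) y) y := by
    rw [hasGradientAt_iff_hasFDerivAt, funext hF, map_smul, map_sum]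
    exact (HasFDerivAt.fun_sum fun j _ =>
      hasGradientAt_iff_hasFDerivAt.mp ((hdiff j) y).hasGradientAt).const_mul _
  rw [hgrad.gradient, smul_inv_smul₀ (Nat.cast_ne_zero.mpr hm)]

theorem sum_norm_gradient_sub_sq_le {L : ℝ} (hm : m ≠ 0)
    (hF : ∀ x, F x = (m : ℝ)⁻¹ * ∑ j, f j x) (hL : 0 < L)
    (hdiff : ∀ j, Differentiable ℝ (f j)) (hconv : ∀ j, ConvexOn ℝ Set.univ (f j))
    (hsmooth : ∀ j a c, ‖gradient (f j) a - gradient (f j) c‖ ≤ L * ‖a - c‖)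
    {xstar : E} (hmin : ∀ y, F xstar ≤ F y) (x : E) :
    ∑ j, ‖gradient (f j) x - gradient (f j) xstar‖ ^ 2 ≤ 2 * L * m * (F x - F xstar) := by
  have hstar : ∑ j, gradient (f j) xstar = 0 := by
    rw [sum_gradient_eq_smul_gradient hm hF hdiff, gradient,
      (IsLocalMin.fderiv_eq_zero (Filter.Eventually.of_forall hmin)), map_zero, smul_zero]
  have hsum (y : E) : ∑ j, f j y = m * F y := by
    rw [hF, mul_inv_cancel_left₀ (Nat.cast_ne_zero.mpr hm)]
  calc ∑ j, ‖gradient (f j) x - gradient (f j) xstar‖ ^ 2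
      ≤ ∑ j, 2 * L * (f j x - f j xstar - ⟪gradient (f j) xstar, x - xstar⟫_ℝ) :=
        sum_le_sum fun j _ =>
          (hconv j).norm_gradient_sub_sq_le (hdiff j) hL (hsmooth j) x xstar
    _ = 2 * L * (∑ j, f j x - ∑ j, f j xstar - ⟪∑ j, gradient (f j) xstar, x - xstar⟫_ℝ) := by
        rw [← mul_sum, sum_inner, sum_sub_distrib, sum_sub_distrib]
    _ = 2 * L * m * (F x - F xstar) := by
        rw [hstar, inner_zero_left, hsum, hsum]
        ring

end FiniteSum

section NormSq

variable {α E : Type*} [Fintype α] [SeminormedAddCommGroup E]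

theorem norm_sub_sq_le_two_mul_add (a b e : E) :
    ‖a - b‖ ^ 2 ≤ 2 * (‖a - e‖ ^ 2 + ‖b - e‖ ^ 2) := by
  calc ‖a - b‖ ^ 2 ≤ (‖a - e‖ + ‖b - e‖) ^ 2 := by
        gcongr
        simpa only [norm_sub_rev e b] using norm_sub_le_norm_sub_add_norm_sub a e b
    _ ≤ 2 * (‖a - e‖ ^ 2 + ‖b - e‖ ^ 2) := add_sq_le

theorem sum_sum_norm_sub_sq_le (u v : α → E) (e : E) :
    ∑ a, ∑ a', ‖u a - v a'‖ ^ 2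
      ≤ 2 * Fintype.card α * (∑ a, ‖u a - e‖ ^ 2 + ∑ a, ‖v a - e‖ ^ 2) := by
  calc ∑ a, ∑ a', ‖u a - v a'‖ ^ 2 ≤ ∑ a, ∑ a', 2 * (‖u a - e‖ ^ 2 + ‖v a' - e‖ ^ 2) :=
        sum_le_sum fun a _ => sum_le_sum fun a' _ => norm_sub_sq_le_two_mul_add _ _ _
    _ = _ := by
        simp only [mul_add, sum_add_distrib, sum_const, card_univ, nsmul_eq_mul, ← mul_sum]
        ring

theorem inv_card_sq_mul_sum_sum_norm_sub_sq_le (u v : α → E) (e : E) :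
    ((Fintype.card α : ℝ) ^ 2)⁻¹ * ∑ a, ∑ a', ‖u a - v a'‖ ^ 2
      ≤ 2 * ((Fintype.card α : ℝ)⁻¹ * ∑ a, ‖u a - e‖ ^ 2)
        + 2 * ((Fintype.card α : ℝ)⁻¹ * ∑ a, ‖v a - e‖ ^ 2) := by
  rcases isEmpty_or_nonempty α with _ | _
  · simp
  have hcard : (Fintype.card α : ℝ) ≠ 0 := by positivity
  calc ((Fintype.card α : ℝ) ^ 2)⁻¹ * ∑ a, ∑ a', ‖u a - v a'‖ ^ 2
      ≤ ((Fintype.card α : ℝ) ^ 2)⁻¹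
          * (2 * Fintype.card α * (∑ a, ‖u a - e‖ ^ 2 + ∑ a, ‖v a - e‖ ^ 2)) := by
        gcongr
        exact sum_sum_norm_sub_sq_le u v e
    _ = _ := by
        field_simp

end NormSq

section Sampling

variable {κ α E : Type*} [Fintype κ] [DecidableEq κ] [Fintype α]
  [NormedAddCommGroup E] [InnerProductSpace ℝ E]

theorem sum_norm_sub_sq_le_sum_norm_sq (Y : α → E) {c : E}
    (hY : ∑ a, Y a = (Fintype.card α : ℝ) • c) :
    ∑ a, ‖Y a - c‖ ^ 2 ≤ ∑ a, ‖Y a‖ ^ 2 := by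
  have hexp : ∑ a, ‖Y a - c‖ ^ 2 = ∑ a, ‖Y a‖ ^ 2 - Fintype.card α * ‖c‖ ^ 2 := by
    simp only [norm_sub_sq_real, sum_add_distrib, sum_sub_distrib, ← mul_sum, ← sum_inner, hY,
      real_inner_smul_left, real_inner_self_eq_norm_sq, sum_const, card_univ, nsmul_eq_mul]
    ring
  rw [hexp]
  exact sub_le_self _ (by positivity)

theorem sum_inner_apply_apply_eq_zero {X : α → E} (hX : ∑ a, X a = 0) {t t' : κ} (hne : t' ≠ t) :
    ∑ J : κ → α, ⟪X (J t), X (J t')⟫_ℝ = 0 := by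
  calc ∑ J : κ → α, ⟪X (J t), X (J t')⟫_ℝ
      = ∑ p : α × ({s // s ≠ t} → α), ⟪X p.1, X (p.2 ⟨t', hne⟩)⟫_ℝ :=
        Fintype.sum_equiv (Equiv.funSplitAt t α) _ _ fun _ => rfl
    _ = 0 := by
        rw [Fintype.sum_prod_type, sum_comm]
        simp [← sum_inner, hX]

/-- Variance of a sum of `card κ` independent uniform samples of a centred family. -/
theorem sum_norm_sum_apply_sq {X : α → E} (hX : ∑ a, X a = 0) :
    ∑ J : κ → α, ‖∑ t, X (J t)‖ ^ 2
      = Fintype.card κ * Fintype.card α ^ (Fintype.card κ - 1) * ∑ a, ‖X a‖ ^ 2 := by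
  have hdiag (t : κ) : ∑ J : κ → α, ‖X (J t)‖ ^ 2
      = Fintype.card α ^ (Fintype.card κ - 1) * ∑ a, ‖X a‖ ^ 2 := by
    simpa [Fintype.piFinset_univ] using
      Fintype.sum_piFinset_apply (fun a => ‖X a‖ ^ 2) (univ : Finset α) t
  calc ∑ J : κ → α, ‖∑ t, X (J t)‖ ^ 2
      = ∑ J : κ → α, ∑ t, ∑ t', ⟪X (J t), X (J t')⟫_ℝ := by
        refine sum_congr rfl fun J _ => ?_
        rw [← real_inner_self_eq_norm_sq, sum_inner]
        simp only [inner_sum]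
    _ = ∑ t, ∑ t', ∑ J : κ → α, ⟪X (J t), X (J t')⟫_ℝ := by
        rw [sum_comm]
        exact sum_congr rfl fun t _ => sum_comm
    _ = ∑ t, ∑ J : κ → α, ‖X (J t)‖ ^ 2 := by
        refine sum_congr rfl fun t _ => ?_
        rw [sum_eq_single t (fun t' _ hne => sum_inner_apply_apply_eq_zero hX hne)
          (by simp)]
        simp only [real_inner_self_eq_norm_sq]
    _ = _ := by
        simp only [hdiag, sum_const, card_univ, nsmul_eq_mul]
        ring

end Sampling

theorem Finset.sum_sum_erase_add {ι R : Type*} [DecidableEq ι] [CommRing R] (s : Finset ι)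
    (p : ι → R) :
    ∑ i ∈ s, ∑ l ∈ s.erase i, (p i + p l) = 2 * (#s - 1) * ∑ i ∈ s, p i := by
  have hinner : ∀ i ∈ s, ∑ l ∈ s.erase i, (p i + p l)
      = (#s - 1) * p i + (∑ l ∈ s, p l - p i) := by
    intro i hi
    rw [sum_add_distrib, sum_const, card_erase_of_mem hi, nsmul_eq_mul,
      Nat.cast_sub (card_pos.mpr ⟨i, hi⟩), Nat.cast_one, sum_erase_eq_sub hi]
  rw [sum_congr rfl hinner, sum_add_distrib, sum_sub_distrib, sum_const, nsmul_eq_mul, ← mul_sum]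
  ring

section SVRG

variable {d m b : ℕ} {f : Fin m → EuclideanSpace ℝ (Fin d) → ℝ}
  {F : EuclideanSpace ℝ (Fin d) → ℝ}

theorem gEst_sub_gradient_eq (hb : b ≠ 0) (x u : EuclideanSpace ℝ (Fin d)) (J : Fin b → Fin m) :
    gEst f F x u J - gradient F x
      = (b : ℝ)⁻¹ • ∑ t, (gradient (f (J t)) x - gradient (f (J t)) u
          - (gradient F x - gradient F u)) := by
  rw [sum_sub_distrib, sum_const, card_univ, Fintype.card_fin, smul_sub,
    ← Nat.cast_smul_eq_nsmul ℝ, inv_smul_smul₀ (Nat.cast_ne_zero.mpr hb), gEst]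
  abel

theorem mean_norm_gEst_sub_gradient_sq_eq (hm : m ≠ 0) (hb : b ≠ 0)
    (hF : ∀ x, F x = (m : ℝ)⁻¹ * ∑ j, f j x) (hdiff : ∀ j, Differentiable ℝ (f j))
    (x u : EuclideanSpace ℝ (Fin d)) :
    ((m : ℝ) ^ b)⁻¹ * ∑ J : Fin b → Fin m, ‖gEst f F x u J - gradient F x‖ ^ 2
      = ((b : ℝ) * m)⁻¹ * ∑ j, ‖gradient (f j) x - gradient (f j) u
          - (gradient F x - gradient F u)‖ ^ 2 := by
  have hcentred :
      ∑ j, (gradient (f j) x - gradient (f j) u - (gradient F x - gradient F u)) = 0 := by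
    rw [sum_sub_distrib, sum_sub_distrib, sum_gradient_eq_smul_gradient hm hF hdiff,
      sum_gradient_eq_smul_gradient hm hF hdiff, sum_const, card_univ, Fintype.card_fin,
      ← Nat.cast_smul_eq_nsmul ℝ, smul_sub, sub_self]
  have hm' : (m : ℝ) ≠ 0 := Nat.cast_ne_zero.mpr hm
  have hb' : (b : ℝ) ≠ 0 := Nat.cast_ne_zero.mpr hb
  simp_rw [gEst_sub_gradient_eq hb, norm_smul, mul_pow, ← mul_sum]
  rw [sum_norm_sum_apply_sq hcentred, Fintype.card_fin, Fintype.card_fin, norm_inv,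
    Real.norm_natCast, ← pow_sub_one_mul hb (m : ℝ)]
  field_simp

theorem mean_norm_gEst_sub_gradient_sq_le {L : ℝ} (hm : m ≠ 0) (hb : b ≠ 0)
    (hF : ∀ x, F x = (m : ℝ)⁻¹ * ∑ j, f j x) (hL : 0 < L)
    (hdiff : ∀ j, Differentiable ℝ (f j)) (hconv : ∀ j, ConvexOn ℝ Set.univ (f j))
    (hsmooth : ∀ j a c, ‖gradient (f j) a - gradient (f j) c‖ ≤ L * ‖a - c‖)
    {xstar : EuclideanSpace ℝ (Fin d)} (hmin : ∀ y, F xstar ≤ F y)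
    (x u : EuclideanSpace ℝ (Fin d)) :
    ((m : ℝ) ^ b)⁻¹ * ∑ J : Fin b → Fin m, ‖gEst f F x u J - gradient F x‖ ^ 2
      ≤ 4 * L / b * (F x - F xstar)
        + 2 / (b * m) * ∑ j, ‖gradient (f j) u - gradient (f j) xstar‖ ^ 2 := by
  have hvar := sum_norm_sub_sq_le_sum_norm_sq (fun j => gradient (f j) x - gradient (f j) u)
    (c := gradient F x - gradient F u) (by
      rw [sum_sub_distrib, sum_gradient_eq_smul_gradient hm hF hdiff,
        sum_gradient_eq_smul_gradient hm hF hdiff, smul_sub, Fintype.card_fin])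
  have hsplit : ∑ j, ‖gradient (f j) x - gradient (f j) u‖ ^ 2
      ≤ 2 * (∑ j, ‖gradient (f j) x - gradient (f j) xstar‖ ^ 2
        + ∑ j, ‖gradient (f j) u - gradient (f j) xstar‖ ^ 2) := by
    rw [← sum_add_distrib, mul_sum]
    exact sum_le_sum fun j _ => norm_sub_sq_le_two_mul_add _ _ _
  have hcoco := sum_norm_gradient_sub_sq_le hm hF hL hdiff hconv hsmooth hmin x
  rw [mean_norm_gEst_sub_gradient_sq_eq hm hb hF hdiff]
  calc ((b : ℝ) * m)⁻¹ * ∑ j, ‖gradient (f j) x - gradient (f j) u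
          - (gradient F x - gradient F u)‖ ^ 2
      ≤ ((b : ℝ) * m)⁻¹ * (2 * (2 * L * m * (F x - F xstar)
          + ∑ j, ‖gradient (f j) u - gradient (f j) xstar‖ ^ 2)) := by
        gcongr
        linarith
    _ = _ := by
        field_simp
        ring

theorem mean_norm_gEst_sub_gEst_sq_le (x u v e : EuclideanSpace ℝ (Fin d)) :
    ((m : ℝ) ^ (2 * b))⁻¹ * ∑ J : Fin b → Fin m, ∑ J' : Fin b → Fin m,
        ‖gEst f F x u J - gEst f F x v J'‖ ^ 2
      ≤ 2 * (((m : ℝ) ^ b)⁻¹ * ∑ J : Fin b → Fin m, ‖gEst f F x u J - e‖ ^ 2)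
        + 2 * (((m : ℝ) ^ b)⁻¹ * ∑ J : Fin b → Fin m, ‖gEst f F x v J - e‖ ^ 2) := by
  simpa [Fintype.card_fun, pow_mul'] using
    inv_card_sq_mul_sum_sum_norm_sub_sq_le (gEst f F x u) (gEst f F x v) e

end SVRG

theorem svrg_pairwise_deviation_bound_general
    {d m b G : ℕ} (hm : 1 ≤ m) (hb : 1 ≤ b) (hG : 2 ≤ G)
    {ι : Type*} [DecidableEq ι] (𝒢 : Finset ι) (hcard : 𝒢.card = G)
    -- Assumption 1
    (f : Fin m → EuclideanSpace ℝ (Fin d) → ℝ)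
    (Favg : EuclideanSpace ℝ (Fin d) → ℝ)
    (hFavg : ∀ x, Favg x = (m : ℝ)⁻¹ * ∑ j : Fin m, f j x)
    (L : ℝ) (hL : 0 < L)
    (hdiff : ∀ j, Differentiable ℝ (f j))
    (hconv : ∀ j, ConvexOn ℝ Set.univ (f j))
    (hsmooth : ∀ j (x y : EuclideanSpace ℝ (Fin d)),
      ‖gradient (f j) x - gradient (f j) y‖ ≤ L * ‖x - y‖)
    (xstar : EuclideanSpace ℝ (Fin d))
    (hmin : ∀ y, Favg xstar ≤ Favg y)
    -- current point and reference points
    (x : EuclideanSpace ℝ (Fin d)) (w : ι → EuclideanSpace ℝ (Fin d)) :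
    ((G : ℝ) * ((G : ℝ) - 1))⁻¹ *
        ∑ i ∈ 𝒢, ∑ l ∈ 𝒢.erase i,
          ((m : ℝ) ^ (2 * b))⁻¹ *
            ∑ J : Fin b → Fin m, ∑ J' : Fin b → Fin m,
              ‖gEst f Favg x (w i) J - gEst f Favg x (w l) J'‖ ^ 2
      ≤ 16 * L / (b : ℝ) * (Favg x - Favg xstar)
        + 8 / (b : ℝ) * (((G : ℝ) * (m : ℝ))⁻¹ * ∑ i ∈ 𝒢, ∑ j : Fin m,
            ‖gradient (f j) (w i) - gradient (f j) xstar‖ ^ 2) := by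
  set Q : EuclideanSpace ℝ (Fin d) → ℝ := fun u =>
    2 * (((m : ℝ) ^ b)⁻¹ * ∑ J : Fin b → Fin m, ‖gEst f Favg x u J - gradient Favg x‖ ^ 2)
  have hG1 : 0 < (G : ℝ) - 1 := by
    have : (2 : ℝ) ≤ G := by exact_mod_cast hG
    linarith
  have hG0 : 0 < (G : ℝ) := by linarith
  calc ((G : ℝ) * ((G : ℝ) - 1))⁻¹ *
        ∑ i ∈ 𝒢, ∑ l ∈ 𝒢.erase i,
          ((m : ℝ) ^ (2 * b))⁻¹ *
            ∑ J : Fin b → Fin m, ∑ J' : Fin b → Fin m,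
              ‖gEst f Favg x (w i) J - gEst f Favg x (w l) J'‖ ^ 2
      ≤ ((G : ℝ) * ((G : ℝ) - 1))⁻¹ * ∑ i ∈ 𝒢, ∑ l ∈ 𝒢.erase i, (Q (w i) + Q (w l)) := by
        gcongr with i _ l _
        exact mean_norm_gEst_sub_gEst_sq_le _ _ _ _
    _ = 2 / G * ∑ i ∈ 𝒢, Q (w i) := by
        rw [sum_sum_erase_add, hcard]
        field_simp
    _ ≤ 2 / G * ∑ i ∈ 𝒢, 2 * (4 * L / b * (Favg x - Favg xstar)
          + 2 / (b * m) * ∑ j, ‖gradient (f j) (w i) - gradient (f j) xstar‖ ^ 2) := by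
        gcongr
        exact mul_le_mul_of_nonneg_left (mean_norm_gEst_sub_gradient_sq_le (by omega : m ≠ 0)
          (by omega : b ≠ 0) hFavg hL hdiff hconv hsmooth hmin x _) zero_le_two
    _ = _ := by
        rw [← mul_sum, sum_add_distrib, sum_const, hcard, nsmul_eq_mul, ← mul_sum]
        field_simp
        ring

/-- Averaged pairwise-deviation bound for the workers' SVRG estimators under Assumption 1. -/
theorem svrg_pairwise_deviation_bound
    {d m b G : ℕ} (hm : 1 ≤ m) (hb : 1 ≤ b) (hG : 2 ≤ G)
    {ι : Type*} [DecidableEq ι] (𝒢 : Finset ι) (hcard : 𝒢.card = G)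
    -- Assumption 1
    (f : Fin m → EuclideanSpace ℝ (Fin d) → ℝ)
    (Favg : EuclideanSpace ℝ (Fin d) → ℝ)
    (hFavg : ∀ x, Favg x = (m : ℝ)⁻¹ * ∑ j : Fin m, f j x)
    (L μc : ℝ) (hL : 0 < L) (hμ : 0 < μc)
    (hdiff : ∀ j, Differentiable ℝ (f j))
    (hconv : ∀ j, ConvexOn ℝ Set.univ (f j))
    (hsmooth : ∀ j (x y : EuclideanSpace ℝ (Fin d)),
      ‖gradient (f j) x - gradient (f j) y‖ ≤ L * ‖x - y‖)
    (hstrong : ∀ x y : EuclideanSpace ℝ (Fin d),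
      Favg x + ⟪gradient Favg x, y - x⟫_ℝ + μc / 2 * ‖y - x‖ ^ 2 ≤ Favg y)
    (xstar : EuclideanSpace ℝ (Fin d))
    (hmin : ∀ y, Favg xstar ≤ Favg y)
    -- current point and reference points
    (x : EuclideanSpace ℝ (Fin d)) (w : ι → EuclideanSpace ℝ (Fin d)) :
    ((G : ℝ) * ((G : ℝ) - 1))⁻¹ *
        ∑ i ∈ 𝒢, ∑ l ∈ 𝒢.erase i,
          ((m : ℝ) ^ (2 * b))⁻¹ *
            ∑ J : Fin b → Fin m, ∑ J' : Fin b → Fin m,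
              ‖gEst f Favg x (w i) J - gEst f Favg x (w l) J'‖ ^ 2
      ≤ 16 * L / (b : ℝ) * (Favg x - Favg xstar)
        + 8 / (b : ℝ) * (((G : ℝ) * (m : ℝ))⁻¹ * ∑ i ∈ 𝒢, ∑ j : Fin m,
            ‖gradient (f j) (w i) - gradient (f j) xstar‖ ^ 2) :=
  svrg_pairwise_deviation_bound_general hm hb hG 𝒢 hcard f Favg hFavg L hL hdiff hconv hsmooth xstar
    hmin x w
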